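/- Let Ω = δB + z with 0 < δ ≤ 1, B bounded C² in ℝ³, and let u be a function with û(ξ) := u(δξ + z) so that the normal derivatives relate by ∂_ν u(y) = δ^{-1} ∂_ν û(η) for y = δη + z. Then δ^{1/2} ‖∂_ν û‖_{H^{-1/2}(∂B)} ≤ ‖∂_ν u‖_{H^{-1/2}(∂Ω)} ≤ ‖∂_ν û‖_{H^{-1/2}(∂B)}. -/
import Mathlib


open MeasureTheory
open scoped ENNReal Pointwise

noncomputable section

abbrev E3 := EuclideanSpace ℝ (Fin 3)

/-- Squared `L²` norm on a surface `S` (w.r.t. 2-dimensional Hausdorff measure). -/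
def l2sq (S : Set E3) (f : E3 → ℝ) : ℝ := ∫ x in S, (f x) ^ 2 ∂μH[2]

/-- Squared Slobodeckij `H^{1/2}` seminorm on a surface `S ⊂ ℝ³`. -/
def slobsq (S : Set E3) (f : E3 → ℝ) : ℝ :=
  ∫ x in S, (∫ y in S, (f x - f y) ^ 2 / ‖x - y‖ ^ 3 ∂μH[2]) ∂μH[2]

/-- The Slobodeckij `H^{1/2}(S)` norm. -/
def H12 (S : Set E3) (f : E3 → ℝ) : ℝ := Real.sqrt (l2sq S f + slobsq S f)

/-- The dual `H^{-1/2}(S)` norm. -/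
def Hm12 (S : Set E3) (ψ : E3 → ℝ) : ℝ :=
  sSup {r : ℝ | ∃ f : E3 → ℝ, H12 S f ≠ 0 ∧
    r = |∫ x in S, ψ x * f x ∂μH[2]| / H12 S f}

theorem haus_img (δ : ℝ) (hδ : 0 < δ) (z : E3) (T : Set E3) :
    μH[2] ((fun ξ : E3 => δ • ξ + z) '' T) = ENNReal.ofReal (δ^2) * μH[2] T := by
  have h1 : (fun ξ : E3 => δ • ξ + z) '' T = (fun x : E3 => x + z) '' (δ • T) := by
    rw [← Set.image_smul, Set.image_image]
  have h2' : μH[2] ((fun x : E3 => x + z) '' (δ • T)) = μH[2] (δ • T) := by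
    simpa using (IsometryEquiv.addRight z (G := E3)).hausdorffMeasure_image 2 (δ • T)
  rw [h1, h2', Measure.hausdorffMeasure_smul₀ (by norm_num) hδ.ne' T,
    ENNReal.smul_def, smul_eq_mul]
  congr 1
  rw [Real.nnnorm_of_nonneg hδ.le, show ((2:ℝ)) = ((2:ℕ):ℝ) from by norm_num,
    NNReal.rpow_natCast, ENNReal.coe_pow, ENNReal.ofReal_pow hδ.le]
  rw [ENNReal.ofReal, Real.toNNReal_of_nonneg hδ.le]

theorem setInt_img (δ : ℝ) (hδ : 0 < δ) (z : E3) (S : Set E3) (F : E3 → ℝ) :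
    ∫ x in (fun ξ : E3 => δ • ξ + z) '' S, F x ∂μH[2]
      = δ^2 * ∫ ξ in S, F (δ • ξ + z) ∂μH[2] := by
  set φh : E3 ≃ₜ E3 := (Homeomorph.smulOfNeZero δ hδ.ne').trans (Homeomorph.addRight z) with hφh
  set φe : E3 ≃ᵐ E3 := φh.toMeasurableEquiv with hφe
  have hcoe : ⇑φe = fun ξ : E3 => δ • ξ + z := rfl
  have hmap : (μH[2] : Measure E3).restrict ((fun ξ : E3 => δ • ξ + z) '' S)
      = Measure.map φe (ENNReal.ofReal (δ^2) • (μH[2] : Measure E3).restrict S) := by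
    refine Measure.ext fun A hA => ?_
    rw [Measure.map_apply φe.measurable hA, Measure.smul_apply,
      Measure.restrict_apply (φe.measurable hA), Measure.restrict_apply hA]
    have himg : A ∩ (fun ξ : E3 => δ • ξ + z) '' S
        = (fun ξ : E3 => δ • ξ + z) '' (⇑φe ⁻¹' A ∩ S) := by
      rw [← hcoe, Set.image_inter φe.injective, Set.image_preimage_eq A φe.surjective]
    rw [himg, haus_img δ hδ z, smul_eq_mul]
  rw [hmap, MeasureTheory.integral_map_equiv, integral_smul_measure,
    ENNReal.toReal_ofReal (sq_nonneg δ)]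
  rfl

theorem l2_img (δ : ℝ) (hδ : 0 < δ) (z : E3) (S : Set E3) (f : E3 → ℝ) :
    l2sq ((fun ξ : E3 => δ • ξ + z) '' S) f = δ^2 * l2sq S (fun ξ => f (δ • ξ + z)) := by
  unfold l2sq
  exact setInt_img δ hδ z S (fun x => (f x)^2)

theorem slob_img (δ : ℝ) (hδ : 0 < δ) (z : E3) (S : Set E3) (f : E3 → ℝ) :
    slobsq ((fun ξ : E3 => δ • ξ + z) '' S) f = δ * slobsq S (fun ξ => f (δ • ξ + z)) := by
  unfold slobsq
  rw [setInt_img δ hδ z]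
  have hinner : ∀ ξ : E3,
      (∫ y in (fun ξ : E3 => δ • ξ + z) '' S, (f (δ • ξ + z) - f y) ^ 2 / ‖(δ • ξ + z) - y‖ ^ 3 ∂μH[2])
      = δ⁻¹ * ∫ η in S, (f (δ • ξ + z) - f (δ • η + z)) ^ 2 / ‖ξ - η‖ ^ 3 ∂μH[2] := by
    intro ξ
    rw [setInt_img δ hδ z]
    have hpt : (fun η : E3 => (f (δ • ξ + z) - f (δ • η + z)) ^ 2 / ‖(δ • ξ + z) - (δ • η + z)‖ ^ 3)
        = fun η : E3 => δ⁻¹ ^ 3 * ((f (δ • ξ + z) - f (δ • η + z)) ^ 2 / ‖ξ - η‖ ^ 3) := by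
      funext η
      have hsub : (δ • ξ + z) - (δ • η + z) = δ • (ξ - η) := by module
      rw [hsub, norm_smul, Real.norm_of_nonneg hδ.le]
      ring
    rw [hpt, integral_const_mul _ _]
    field_simp
  have hpt2 : (fun ξ : E3 =>
      ∫ y in (fun ξ : E3 => δ • ξ + z) '' S, (f (δ • ξ + z) - f y) ^ 2 / ‖(δ • ξ + z) - y‖ ^ 3 ∂μH[2])
      = fun ξ : E3 => δ⁻¹ * ∫ η in S, (f (δ • ξ + z) - f (δ • η + z)) ^ 2 / ‖ξ - η‖ ^ 3 ∂μH[2] :=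
    funext hinner
  rw [hpt2, integral_const_mul _ _]
  field_simp

theorem psi_rel (δ : ℝ) (hδ : 0 < δ) (z : E3) (νB : E3 → E3) (u : E3 → ℝ)
    (hu : Differentiable ℝ u) (ξ : E3) :
    fderiv ℝ u (δ • ξ + z) (νB (δ⁻¹ • ((δ • ξ + z) - z)))
      = δ⁻¹ * fderiv ℝ (fun ζ : E3 => u (δ • ζ + z)) ξ (νB ξ) := by
  have hξ : δ⁻¹ • ((δ • ξ + z) - z) = ξ := by
    rw [add_sub_cancel_right, smul_smul, inv_mul_cancel₀ hδ.ne', one_smul]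
  rw [hξ]
  have hφ : HasFDerivAt (fun ζ : E3 => δ • ζ + z)
      (δ • ContinuousLinearMap.id ℝ E3) ξ := by
    simpa using ((hasFDerivAt_id ξ).const_smul δ).add_const z
  have hfd : fderiv ℝ (fun ζ : E3 => u (δ • ζ + z)) ξ
      = (fderiv ℝ u (δ • ξ + z)).comp (δ • ContinuousLinearMap.id ℝ E3) :=
    HasFDerivAt.fderiv (by exact ((hu (δ • ξ + z)).hasFDerivAt.comp ξ hφ))
  rw [hfd]
  simp only [ContinuousLinearMap.coe_comp', Function.comp_apply,
    ContinuousLinearMap.smul_apply, ContinuousLinearMap.id_apply, _root_.map_smul, smul_eq_mul]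
  field_simp

theorem num_rel (δ : ℝ) (hδ : 0 < δ) (z : E3) (S : Set E3) (νB : E3 → E3) (u : E3 → ℝ)
    (hu : Differentiable ℝ u) (f : E3 → ℝ) :
    (∫ x in (fun ξ : E3 => δ • ξ + z) '' S,
        (fderiv ℝ u x (νB (δ⁻¹ • (x - z)))) * f x ∂μH[2])
      = δ * ∫ ξ in S,
          (fderiv ℝ (fun ζ : E3 => u (δ • ζ + z)) ξ (νB ξ)) * f (δ • ξ + z) ∂μH[2] := by
  rw [setInt_img δ hδ z]
  have hpt : (fun ξ : E3 => (fderiv ℝ u (δ • ξ + z) (νB (δ⁻¹ • ((δ • ξ + z) - z)))) * f (δ • ξ + z))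
      = fun ξ : E3 => δ⁻¹ * ((fderiv ℝ (fun ζ : E3 => u (δ • ζ + z)) ξ (νB ξ)) * f (δ • ξ + z)) := by
    funext ξ
    rw [psi_rel δ hδ z νB u hu ξ]
    ring
  rw [hpt, integral_const_mul _ _]
  field_simp

theorem l2sq_nonneg (S : Set E3) (f : E3 → ℝ) : 0 ≤ l2sq S f :=
  integral_nonneg fun x => sq_nonneg _

theorem slobsq_nonneg (S : Set E3) (f : E3 → ℝ) : 0 ≤ slobsq S f :=
  integral_nonneg fun x => integral_nonneg fun y =>
    div_nonneg (sq_nonneg _) (pow_nonneg (norm_nonneg _) 3)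

theorem H12_nonneg (S : Set E3) (f : E3 → ℝ) : 0 ≤ H12 S f := Real.sqrt_nonneg _

/-- H12 on the scaled set, in terms of the pulled-back function. -/
theorem H12_img (δ : ℝ) (hδ : 0 < δ) (z : E3) (S : Set E3) (f : E3 → ℝ) :
    H12 ((fun ξ : E3 => δ • ξ + z) '' S) f
      = Real.sqrt (δ^2 * l2sq S (fun ξ => f (δ • ξ + z))
          + δ * slobsq S (fun ξ => f (δ • ξ + z))) := by
  unfold H12
  rw [l2_img δ hδ z, slob_img δ hδ z]

theorem H12_ne_iff (δ : ℝ) (hδ : 0 < δ) (hδ1 : δ ≤ 1) (z : E3) (S : Set E3) (f : E3 → ℝ) :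
    H12 ((fun ξ : E3 => δ • ξ + z) '' S) f ≠ 0 ↔ H12 S (fun ξ => f (δ • ξ + z)) ≠ 0 := by
  have hL := l2sq_nonneg S (fun ξ => f (δ • ξ + z))
  have hS := slobsq_nonneg S (fun ξ => f (δ • ξ + z))
  rw [H12_img δ hδ z]
  unfold H12
  constructor
  · intro h h0
    apply h
    have : l2sq S (fun ξ => f (δ • ξ + z)) + slobsq S (fun ξ => f (δ • ξ + z)) = 0 := by
      by_contra hne
      have hlt : 0 < l2sq S (fun ξ => f (δ • ξ + z)) + slobsq S (fun ξ => f (δ • ξ + z)) :=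
        lt_of_le_of_ne (by linarith) (Ne.symm hne)
      exact absurd h0 (ne_of_gt (Real.sqrt_pos.mpr hlt))
    have hL0 : l2sq S (fun ξ => f (δ • ξ + z)) = 0 := by linarith
    have hS0 : slobsq S (fun ξ => f (δ • ξ + z)) = 0 := by linarith
    rw [hL0, hS0]; simp
  · intro h
    have hlt : 0 < l2sq S (fun ξ => f (δ • ξ + z)) + slobsq S (fun ξ => f (δ • ξ + z)) := by
      rcases lt_or_eq_of_le (add_nonneg hL hS) with h' | h'
      · exact h'
      · exact absurd (by rw [← h']; simp) h
    have : 0 < δ^2 * l2sq S (fun ξ => f (δ • ξ + z)) + δ * slobsq S (fun ξ => f (δ • ξ + z)) := by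
      nlinarith [mul_pos (mul_pos hδ hδ) hlt,
        mul_nonneg (mul_nonneg hδ.le hS) (by linarith : (0:ℝ) ≤ 1 - δ)]
    exact ne_of_gt (Real.sqrt_pos.mpr this)

theorem H12_bounds (δ : ℝ) (hδ : 0 < δ) (hδ1 : δ ≤ 1) (z : E3) (S : Set E3) (f : E3 → ℝ) :
    δ * H12 S (fun ξ => f (δ • ξ + z)) ≤ H12 ((fun ξ : E3 => δ • ξ + z) '' S) f ∧
    H12 ((fun ξ : E3 => δ • ξ + z) '' S) f ≤ Real.sqrt δ * H12 S (fun ξ => f (δ • ξ + z)) := by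
  have hL := l2sq_nonneg S (fun ξ => f (δ • ξ + z))
  have hS := slobsq_nonneg S (fun ξ => f (δ • ξ + z))
  rw [H12_img δ hδ z]
  unfold H12
  constructor
  · calc δ * Real.sqrt (l2sq S (fun ξ => f (δ • ξ + z)) + slobsq S (fun ξ => f (δ • ξ + z)))
        = Real.sqrt (δ^2) * Real.sqrt (l2sq S (fun ξ => f (δ • ξ + z)) + slobsq S (fun ξ => f (δ • ξ + z))) := by
          rw [Real.sqrt_sq hδ.le]
      _ = Real.sqrt (δ^2 * (l2sq S (fun ξ => f (δ • ξ + z)) + slobsq S (fun ξ => f (δ • ξ + z)))) := by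
          rw [← Real.sqrt_mul (sq_nonneg δ)]
      _ ≤ _ := Real.sqrt_le_sqrt (by
          nlinarith [mul_nonneg (mul_nonneg hδ.le hS) (by linarith : (0:ℝ) ≤ 1 - δ)])
  · calc Real.sqrt (δ^2 * l2sq S (fun ξ => f (δ • ξ + z)) + δ * slobsq S (fun ξ => f (δ • ξ + z)))
        ≤ Real.sqrt (δ * (l2sq S (fun ξ => f (δ • ξ + z)) + slobsq S (fun ξ => f (δ • ξ + z)))) :=
          Real.sqrt_le_sqrt (by
            nlinarith [mul_nonneg (mul_nonneg hδ.le hL) (by linarith : (0:ℝ) ≤ 1 - δ)])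
      _ = _ := Real.sqrt_mul hδ.le _

theorem ratio_core (δ : ℝ) (hδ : 0 < δ) (hδ1 : δ ≤ 1) (z : E3) (S : Set E3)
    (νB : E3 → E3) (u : E3 → ℝ) (hu : Differentiable ℝ u) (f : E3 → ℝ)
    (hg : H12 S (fun ξ => f (δ • ξ + z)) ≠ 0) :
    H12 ((fun ξ : E3 => δ • ξ + z) '' S) f ≠ 0 ∧
    |∫ x in (fun ξ : E3 => δ • ξ + z) '' S,
        (fderiv ℝ u x (νB (δ⁻¹ • (x - z)))) * f x ∂μH[2]|
        / H12 ((fun ξ : E3 => δ • ξ + z) '' S) f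
      ≤ |∫ ξ in S, (fderiv ℝ (fun ζ : E3 => u (δ • ζ + z)) ξ (νB ξ)) * f (δ • ξ + z) ∂μH[2]|
        / H12 S (fun ξ => f (δ • ξ + z)) ∧
    Real.sqrt δ *
        (|∫ ξ in S, (fderiv ℝ (fun ζ : E3 => u (δ • ζ + z)) ξ (νB ξ)) * f (δ • ξ + z) ∂μH[2]|
          / H12 S (fun ξ => f (δ • ξ + z)))
      ≤ |∫ x in (fun ξ : E3 => δ • ξ + z) '' S,
          (fderiv ℝ u x (νB (δ⁻¹ • (x - z)))) * f x ∂μH[2]|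
        / H12 ((fun ξ : E3 => δ • ξ + z) '' S) f := by
  have hΩne : H12 ((fun ξ : E3 => δ • ξ + z) '' S) f ≠ 0 :=
    (H12_ne_iff δ hδ hδ1 z S f).mpr hg
  set HB := H12 S (fun ξ => f (δ • ξ + z)) with hHB
  set HΩ := H12 ((fun ξ : E3 => δ • ξ + z) '' S) f with hHΩ
  have hBpos : 0 < HB := lt_of_le_of_ne (H12_nonneg _ _) (Ne.symm hg)
  have hΩpos : 0 < HΩ := lt_of_le_of_ne (H12_nonneg _ _) (Ne.symm hΩne)
  obtain ⟨hlb, hub⟩ := H12_bounds δ hδ hδ1 z S f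
  set NB := ∫ ξ in S, (fderiv ℝ (fun ζ : E3 => u (δ • ζ + z)) ξ (νB ξ)) * f (δ • ξ + z) ∂μH[2]
    with hNB
  have hNΩ : (∫ x in (fun ξ : E3 => δ • ξ + z) '' S,
      (fderiv ℝ u x (νB (δ⁻¹ • (x - z)))) * f x ∂μH[2]) = δ * NB :=
    num_rel δ hδ z S νB u hu f
  rw [hNΩ]
  have habs : |δ * NB| = δ * |NB| := by rw [abs_mul, abs_of_pos hδ]
  rw [habs]
  have hss : Real.sqrt δ * Real.sqrt δ = δ := Real.mul_self_sqrt hδ.le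
  refine ⟨hΩne, ?_, ?_⟩
  · rw [div_le_div_iff₀ hΩpos hBpos]
    nlinarith [mul_nonneg (abs_nonneg NB) (sub_nonneg.mpr hlb)]
  · rw [mul_div_assoc', div_le_div_iff₀ hBpos hΩpos]
    nlinarith [mul_le_mul_of_nonneg_left hub
      (mul_nonneg (Real.sqrt_nonneg δ) (abs_nonneg NB)), hss,
      mul_nonneg (abs_nonneg NB) hBpos.le, Real.sqrt_nonneg δ]

/-- with `Ω = δB + z`, `û(ξ) = u(δξ+z)`, `ν` the outward unit normal of `B`
(transported to `∂Ω` by `ν_Ω(x) = ν_B((x−z)/δ)`), the normal derivatives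
`∂_ν u(x) = ∇u(x)·ν_Ω(x)` on `∂Ω` and `∂_ν û(η) = ∇û(η)·ν_B(η)` on `∂B` satisfy
`δ^{1/2} ‖∂_ν û‖_{H^{-1/2}(∂B)} ≤ ‖∂_ν u‖_{H^{-1/2}(∂Ω)} ≤ ‖∂_ν û‖_{H^{-1/2}(∂B)}`. -/
theorem normal_derivative_Hm12_scaling
    (B : Set E3) (hBo : IsOpen B) (hBb : Bornology.IsBounded B)
    (δ : ℝ) (hδ0 : 0 < δ) (hδ1 : δ ≤ 1) (z : E3)
    (νB : E3 → E3) (hνB : ∀ ξ ∈ frontier B, ‖νB ξ‖ = 1)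
    (u : E3 → ℝ) (hu : Differentiable ℝ u) :
    δ ^ ((1:ℝ)/2) *
        Hm12 (frontier B) (fun η => fderiv ℝ (fun ξ => u (δ • ξ + z)) η (νB η))
      ≤ Hm12 (frontier ((fun ξ : E3 => δ • ξ + z) '' B))
          (fun x => fderiv ℝ u x (νB (δ⁻¹ • (x - z)))) ∧
    Hm12 (frontier ((fun ξ : E3 => δ • ξ + z) '' B))
        (fun x => fderiv ℝ u x (νB (δ⁻¹ • (x - z))))
      ≤ Hm12 (frontier B) (fun η => fderiv ℝ (fun ξ => u (δ • ξ + z)) η (νB η)) := by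
  have hfr : frontier ((fun ξ : E3 => δ • ξ + z) '' B)
      = (fun ξ : E3 => δ • ξ + z) '' frontier B :=
    (((Homeomorph.smulOfNeZero δ hδ0.ne').trans (Homeomorph.addRight z)).image_frontier B).symm
  rw [hfr]
  rw [show δ ^ ((1:ℝ)/2) = Real.sqrt δ from (Real.sqrt_eq_rpow δ).symm]
  set s := Real.sqrt δ with hs
  have hspos : 0 < s := Real.sqrt_pos.mpr hδ0
  set SB := frontier B with hSB
  unfold Hm12
  set A := {r : ℝ | ∃ f : E3 → ℝ, H12 SB f ≠ 0 ∧
    r = |∫ x in SB, (fderiv ℝ (fun ξ => u (δ • ξ + z)) x (νB x)) * f x ∂μH[2]| / H12 SB f}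
    with hA
  set C := {r : ℝ | ∃ f : E3 → ℝ, H12 ((fun ξ : E3 => δ • ξ + z) '' SB) f ≠ 0 ∧
    r = |∫ x in (fun ξ : E3 => δ • ξ + z) '' SB,
        (fderiv ℝ u x (νB (δ⁻¹ • (x - z)))) * f x ∂μH[2]|
      / H12 ((fun ξ : E3 => δ • ξ + z) '' SB) f} with hC
  have hI : ∀ c ∈ C, ∃ a ∈ A, c ≤ a ∧ s * a ≤ c := by
    rintro c ⟨f, hf, rfl⟩
    have hgne : H12 SB (fun ξ => f (δ • ξ + z)) ≠ 0 := (H12_ne_iff δ hδ0 hδ1 z SB f).mp hf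
    obtain ⟨-, h1, h2⟩ := ratio_core δ hδ0 hδ1 z SB νB u hu f hgne
    exact ⟨_, ⟨fun ξ => f (δ • ξ + z), hgne, rfl⟩, h1, h2⟩
  have hII : ∀ a ∈ A, ∃ c ∈ C, c ≤ a ∧ s * a ≤ c := by
    rintro a ⟨g, hgne, rfl⟩
    set f : E3 → ℝ := fun x => g (δ⁻¹ • (x - z)) with hf
    have hpt : ∀ ξ : E3, f (δ • ξ + z) = g ξ := by
      intro ξ
      show g (δ⁻¹ • ((δ • ξ + z) - z)) = g ξ
      rw [add_sub_cancel_right, smul_smul, inv_mul_cancel₀ hδ0.ne', one_smul]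
    have hg' : H12 SB (fun ξ => f (δ • ξ + z)) ≠ 0 := by
      simp only [hpt]; exact hgne
    obtain ⟨hΩne, h1, h2⟩ := ratio_core δ hδ0 hδ1 z SB νB u hu f hg'
    simp only [hpt] at h1 h2
    exact ⟨_, ⟨f, hΩne, rfl⟩, h1, h2⟩
  constructor
  · rcases Set.eq_empty_or_nonempty A with hAe | hAne
    · have hCe : C = ∅ := by
        rw [Set.eq_empty_iff_forall_notMem]
        intro c hc
        obtain ⟨a, ha, -, -⟩ := hI c hc
        rw [hAe] at ha; exact ha
      rw [hAe, hCe, Real.sSup_empty]; simp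
    · by_cases hCb : BddAbove C
      · have hmain : sSup A ≤ sSup C / s := by
          refine csSup_le hAne fun a ha => ?_
          obtain ⟨c, hc, -, hsc⟩ := hII a ha
          have : s * a ≤ sSup C := hsc.trans (le_csSup hCb hc)
          rw [le_div_iff₀ hspos]; linarith [mul_comm s a]
        calc s * sSup A ≤ s * (sSup C / s) := mul_le_mul_of_nonneg_left hmain hspos.le
          _ = sSup C := by field_simp
      · have hAb : ¬ BddAbove A := by
          rintro ⟨M, hM⟩
          refine hCb ⟨M, fun c hc => ?_⟩
          obtain ⟨a, ha, hca, -⟩ := hI c hc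
          exact hca.trans (hM ha)
        rw [Real.sSup_of_not_bddAbove hAb, Real.sSup_of_not_bddAbove hCb]; simp
  · rcases Set.eq_empty_or_nonempty C with hCe | hCne
    · have hAe : A = ∅ := by
        rw [Set.eq_empty_iff_forall_notMem]
        intro a ha
        obtain ⟨c, hc, -, -⟩ := hII a ha
        rw [hCe] at hc; exact hc
      rw [hAe, hCe]
    · by_cases hAb : BddAbove A
      · refine csSup_le hCne fun c hc => ?_
        obtain ⟨a, ha, hca, -⟩ := hI c hc
        exact hca.trans (le_csSup hAb ha)
      · have hCb : ¬ BddAbove C := by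
          rintro ⟨M, hM⟩
          refine hAb ⟨M / s, fun a ha => ?_⟩
          obtain ⟨c, hc, -, hsc⟩ := hII a ha
          have : s * a ≤ M := hsc.trans (hM hc)
          rw [le_div_iff₀ hspos]; linarith [mul_comm s a]
        rw [Real.sSup_of_not_bddAbove hAb, Real.sSup_of_not_bddAbove hCb]
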